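/- Let T be a subtournament of a 3-dicritical digraph D and let S be a transitive subtournament of T with acyclic ordering v1, …, vs. For any vertex x of T not in S, there is an increasing sequence of intervals (I1, I2, I3, I4) of S whose union is S such that, in T, x dominates I1 ∪ I3 and is dominated by I2 ∪ I4. -/

import Mathlib

/-- A (loopless, simple) digraph on vertex type `V`. -/
structure SimpleDigraph (V : Type) where
  Adj : V → V → Prop
  loopless : ∀ v, ¬ Adj v v

namespace SimpleDigraph

/-- A set of arcs (given as a relation) is acyclic if it admits no directed closed walk. -/
def AcyclicRel {V : Type} (A : V → V → Prop) : Prop :=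
  ∀ v, ¬ Relation.TransGen A v v

/-- A set of arcs is 2-dicolourable if the vertices can be coloured with two colours
so that each colour class induces an acyclic subdigraph. -/
def Dicolourable2Rel {V : Type} (A : V → V → Prop) : Prop :=
  ∃ φ : V → Fin 2, ∀ i : Fin 2,
    AcyclicRel (fun a b => A a b ∧ φ a = i ∧ φ b = i)

/-- A digraph is 2-dicolourable if its vertices can be coloured with two colours
so that each colour class induces an acyclic subdigraph. -/
def Dicolourable2 {V : Type} (D : SimpleDigraph V) : Prop :=
  Dicolourable2Rel D.Adj

/-- `(S, A)` describes a subdigraph of `D`: its vertex set is `S` and its arcs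
are given by `A`, which must join vertices of `S` and be arcs of `D`. -/
def IsSubdigraphOn {V : Type} (D : SimpleDigraph V) (S : Set V) (A : V → V → Prop) : Prop :=
  ∀ u v, A u v → u ∈ S ∧ v ∈ S ∧ D.Adj u v

/-- `D` is 3-dicritical: `D` is not 2-dicolourable, but every proper subdigraph of `D`
(one missing a vertex or an arc) is 2-dicolourable. -/
def Dicritical3 {V : Type} (D : SimpleDigraph V) : Prop :=
  ¬ D.Dicolourable2 ∧
    ∀ (S : Set V) (A : V → V → Prop), D.IsSubdigraphOn S A →
      (S ≠ Set.univ ∨ A ≠ D.Adj) → Dicolourable2Rel A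

/-- A digraph is semi-complete if any two distinct vertices are joined by at least one arc. -/
def SemiComplete {V : Type} (D : SimpleDigraph V) : Prop :=
  ∀ u v : V, u ≠ v → D.Adj u v ∨ D.Adj v u

/-- A tournament is a semi-complete digraph with no digon. -/
def IsTournament {V : Type} (D : SimpleDigraph V) : Prop :=
  D.SemiComplete ∧ ∀ u v : V, ¬ (D.Adj u v ∧ D.Adj v u)

/-- Isomorphism of digraphs. -/
def Iso {V W : Type} (D : SimpleDigraph V) (E : SimpleDigraph W) : Prop :=
  ∃ e : V ≃ W, ∀ u v : V, D.Adj u v ↔ E.Adj (e u) (e v)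

/-- `D` contains (a copy of) `H` as a subdigraph. -/
def ContainsSub {V W : Type} (D : SimpleDigraph V) (H : SimpleDigraph W) : Prop :=
  ∃ f : W → V, Function.Injective f ∧ ∀ a b, H.Adj a b → D.Adj (f a) (f b)

/-- `D` contains (a copy of) `H` as an induced subdigraph. -/
def ContainsInduced {V W : Type} (D : SimpleDigraph V) (H : SimpleDigraph W) : Prop :=
  ∃ f : W → V, Function.Injective f ∧ ∀ a b, H.Adj a b ↔ D.Adj (f a) (f b)

end SimpleDigraph

/-!
Take an arc `u → w` of the 3-dicritical digraph `D`. A 2-dicolouring of `D - uw` must have a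
monochromatic directed path from `w` back to `u`, so every vertex `m` with `u → m → w` gets the
other colour, and hence the vertices "between" `u` and `w` induce an acyclic subdigraph.
If the arcs between `x` and `S` alternated in, out, in, out along `vᵢ, vⱼ, vₖ, vₗ`, then `x`, `vⱼ`
and `vₖ` would all lie between `vᵢ` and `vₗ` and form the directed triangle `x → vⱼ → vₖ → x`.
So the out-neighbourhood pattern of `x` along `S` has no subsequence `0101`, which is exactly the
statement that it has the shape `1*0*1*0*`.
-/

open Relation

theorem Relation.TransGen.split_added_edge {α : Type*} {R : α → α → Prop} {u w a b : α}
    (h : TransGen (fun x y => R x y ∨ (x = u ∧ y = w)) a b) :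
    TransGen R a b ∨ (ReflTransGen R a u ∧ ReflTransGen R w b) := by
  induction h using TransGen.head_induction_on with
  | single hab =>
    rcases hab with hR | ⟨rfl, rfl⟩
    · exact .inl (.single hR)
    · exact .inr ⟨.refl, .refl⟩
  | head hac _ ih =>
    rcases hac with hR | ⟨rfl, rfl⟩
    · rcases ih with h | ⟨h1, h2⟩
      · exact .inl (.head hR h)
      · exact .inr ⟨.head hR h1, h2⟩
    · rcases ih with h | ⟨_, h2⟩
      · exact .inr ⟨.refl, h.to_reflTransGen⟩
      · exact .inr ⟨.refl, h2⟩

namespace SimpleDigraph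

variable {V : Type} {D : SimpleDigraph V}

theorem Dicritical3.acyclicRel_between (hD : D.Dicritical3) {u w : V} (huw : D.Adj u w) :
    AcyclicRel fun a b => D.Adj a b ∧ (D.Adj u a ∧ D.Adj a w) ∧ (D.Adj u b ∧ D.Adj b w) := by
  have ne_of_adj {a b : V} (h : D.Adj a b) : a ≠ b := fun hab => D.loopless a (hab ▸ h)
  let A : V → V → Prop := fun a b => D.Adj a b ∧ ¬(a = u ∧ b = w)
  have hA : A ≠ D.Adj := fun h => (show A u w from h ▸ huw).2 ⟨rfl, rfl⟩
  obtain ⟨φ, hφ⟩ := hD.2 Set.univ A (fun a b h => ⟨trivial, trivial, h.1⟩) (.inr hA)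
  obtain ⟨c, z, hz⟩ : ∃ c z, TransGen (fun a b => D.Adj a b ∧ φ a = c ∧ φ b = c) z z := by
    by_contra! h
    exact hD.1 ⟨φ, h⟩
  have hu_hw : φ u = c ∧ φ w = c := by
    by_contra h
    refine hφ c z (TransGen.mono (fun a b ⟨hab, ha, hb⟩ => ⟨⟨hab, ?_⟩, ha, hb⟩) z z hz)
    rintro ⟨rfl, rfl⟩
    exact h ⟨ha, hb⟩
  have hwu : ReflTransGen (fun a b => A a b ∧ φ a = c ∧ φ b = c) w u := by
    have hz' : TransGen (fun a b => (A a b ∧ φ a = c ∧ φ b = c) ∨ (a = u ∧ b = w)) z z :=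
      TransGen.mono (fun a b ⟨hab, ha, hb⟩ => by
        by_cases h : a = u ∧ b = w
        exacts [.inr h, .inl ⟨⟨hab, h⟩, ha, hb⟩]) z z hz
    rcases hz'.split_added_edge with h | ⟨h1, h2⟩
    exacts [(hφ c z h).elim, h2.trans h1]
  have hmid : ∀ m, D.Adj u m → D.Adj m w → φ m ≠ c := fun m hum hmw hm =>
    hφ c u <| (TransGen.head ⟨⟨hum, fun h => ne_of_adj hmw h.2⟩, hu_hw.1, hm⟩ <|
      .single ⟨⟨hmw, fun h => ne_of_adj hum h.1.symm⟩, hm, hu_hw.2⟩).trans_left hwu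
  have other : ∀ d : Fin 2, d ≠ c → d = c + 1 := by
    fin_cases c <;> decide
  intro z hz
  exact hφ (c + 1) z <| TransGen.mono (fun a b ⟨hab, ⟨hua, haw⟩, hub, hbw⟩ =>
    ⟨⟨hab, fun h => ne_of_adj hua h.1.symm⟩, other _ (hmid a hua haw),
      other _ (hmid b hub hbw)⟩) z z hz

end SimpleDigraph

namespace Fin

theorem exists_first_ge {s : ℕ} (p : Fin s → Prop) {a : ℕ} (ha : a ≤ s) :
    ∃ b, a ≤ b ∧ b ≤ s ∧ (∀ i : Fin s, a ≤ i → i < b → ¬p i) ∧ ∀ h : b < s, p ⟨b, h⟩ := by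
  classical
  have hs : a ≤ s ∧ ∀ h : s < s, p ⟨s, h⟩ := ⟨ha, fun h => (lt_irrefl s h).elim⟩
  have hP : ∃ n, a ≤ n ∧ ∀ h : n < s, p ⟨n, h⟩ := ⟨s, hs⟩
  exact ⟨Nat.find hP, (Nat.find_spec hP).1, Nat.find_min' hP hs,
    fun i hai hib hpi => Nat.find_min hP hib ⟨hai, fun _ => hpi⟩, (Nat.find_spec hP).2⟩

theorem exists_cuts_of_not_alternating {s : ℕ} (p : Fin s → Prop)
    (hp : ∀ i j k l : Fin s, i < j → j < k → k < l → ¬p i → p j → ¬p k → ¬p l) :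
    ∃ a b c : ℕ, a ≤ b ∧ b ≤ c ∧ c ≤ s ∧ ∀ i : Fin s,
      (i.val < a → p i) ∧ (a ≤ i.val → i.val < b → ¬p i) ∧
      (b ≤ i.val → i.val < c → p i) ∧ (c ≤ i.val → ¬p i) := by
  obtain ⟨a, -, has, ha₀, ha⟩ := exists_first_ge (¬p ·) (Nat.zero_le s)
  obtain ⟨b, hab, hbs, hb₀, hb⟩ := exists_first_ge p has
  obtain ⟨c, hbc, hcs, hc₀, hc⟩ := exists_first_ge (¬p ·) hbs
  refine ⟨a, b, c, hab, hbc, hcs, fun i => ⟨fun hi => not_not.1 (ha₀ i (Nat.zero_le _) hi),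
    hb₀ i, fun h₁ h₂ => not_not.1 (hc₀ i h₁ h₂), fun hci hpi => ?_⟩⟩
  have hcs' : c < s := hci.trans_lt i.isLt
  have hbs' : b < s := hbc.trans_lt hcs'
  have has' : a < s := hab.trans_lt hbs'
  have hci' : c < i.val :=
    hci.lt_of_ne fun e => hc hcs' ((Fin.ext e : (⟨c, hcs'⟩ : Fin s) = i) ▸ hpi)
  refine hp ⟨a, has'⟩ ⟨b, hbs'⟩ ⟨c, hcs'⟩ i ?_ ?_ hci' (ha has') (hb hbs') (hc hcs') hpi
  · exact Fin.mk_lt_mk.2 (hab.lt_of_ne (by rintro rfl; exact ha has' (hb hbs')))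
  · exact Fin.mk_lt_mk.2 (hbc.lt_of_ne (by rintro rfl; exact hc hcs' (hb hbs')))

end Fin

theorem intervals_of_transitive_subtournament_general
    {V : Type} (D : SimpleDigraph V) (hD : D.Dicritical3)
    (TS : Set V) (TA : V → V → Prop) (hsub : D.IsSubdigraphOn TS TA)
    (htour : ∀ u v, u ∈ TS → v ∈ TS → u ≠ v → (TA u v ↔ ¬ TA v u))
    (s : ℕ) (v : Fin s → V)
    (hmem : ∀ i, v i ∈ TS)
    (hacyclic : ∀ i j : Fin s, i < j → TA (v i) (v j))
    (x : V) (hx : x ∈ TS) (hxS : ∀ i, x ≠ v i) :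
    ∃ a b c : ℕ, a ≤ b ∧ b ≤ c ∧ c ≤ s ∧
      ∀ i : Fin s,
        (i.val < a → TA x (v i)) ∧
        (a ≤ i.val → i.val < b → TA (v i) x) ∧
        (b ≤ i.val → i.val < c → TA x (v i)) ∧
        (c ≤ i.val → TA (v i) x) := by
  have adj {a b : V} (h : TA a b) : D.Adj a b := (hsub a b h).2.2
  have dichot (i : Fin s) : TA (v i) x ↔ ¬TA x (v i) := htour _ _ (hmem i) hx (hxS i).symm
  have no_alternation : ∀ i j k l : Fin s, i < j → j < k → k < l →
      ¬TA x (v i) → TA x (v j) → ¬TA x (v k) → ¬TA x (v l) := by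
    intro i j k l hij hjk hkl hi hj hk hl
    rw [← dichot] at hi hk
    have between {m : V} (h₁ : TA (v i) m) (h₂ : TA m (v l)) :
        D.Adj (v i) m ∧ D.Adj m (v l) := ⟨adj h₁, adj h₂⟩
    have hxB := between hi hl
    have hjB := between (hacyclic i j hij) (hacyclic j l (hjk.trans hkl))
    have hkB := between (hacyclic i k (hij.trans hjk)) (hacyclic k l hkl)
    exact hD.acyclicRel_between (adj (hacyclic i l (hij.trans (hjk.trans hkl)))) x <|
      .head ⟨adj hj, hxB, hjB⟩ <| .head ⟨adj (hacyclic j k hjk), hjB, hkB⟩ <|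
        .single ⟨adj hk, hkB, hxB⟩
  simpa only [dichot] using Fin.exists_cuts_of_not_alternating _ no_alternation

/-- Let `T` (vertex set `TS`, arcs `TA`) be a subtournament of a
3-dicritical digraph `D`, and let `S` be a transitive subtournament of `T` with acyclic
ordering `v 0, …, v (s-1)`. For any vertex `x` of `T` not in `S`, there is an increasing
sequence of four intervals of `S` (given by cut points `a ≤ b ≤ c ≤ s`) covering `S`,
such that in `T` the vertex `x` dominates the first and third intervals and is dominated
by the second and fourth. -/
theorem intervals_of_transitive_subtournament
    {V : Type} [Fintype V] (D : SimpleDigraph V) (hD : D.Dicritical3)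
    (TS : Set V) (TA : V → V → Prop) (hsub : D.IsSubdigraphOn TS TA)
    (htour : ∀ u v, u ∈ TS → v ∈ TS → u ≠ v → (TA u v ↔ ¬ TA v u))
    (s : ℕ) (v : Fin s → V) (hinj : Function.Injective v)
    (hmem : ∀ i, v i ∈ TS)
    (hacyclic : ∀ i j : Fin s, i < j → TA (v i) (v j))
    (x : V) (hx : x ∈ TS) (hxS : ∀ i, x ≠ v i) :
    ∃ a b c : ℕ, a ≤ b ∧ b ≤ c ∧ c ≤ s ∧
      ∀ i : Fin s,
        (i.val < a → TA x (v i)) ∧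
        (a ≤ i.val → i.val < b → TA (v i) x) ∧
        (b ≤ i.val → i.val < c → TA x (v i)) ∧
        (c ≤ i.val → TA (v i) x) :=
  intervals_of_transitive_subtournament_general D hD TS TA hsub htour s v hmem hacyclic x hx hxS
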